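/- arXiv:2410.06612 — 2 statements merged into one kernel-verified Lean document; each statement's English description precedes it below -/
import Mathlib

section
/- Let A = ∑_{i=1}^{m} x_i P_i be an n × n bistochastic matrix, where P_1, …, P_m are n × n permutation matrices, x_i > 0 for all i, and ∑_{i=1}^{m} x_i = 1. Then A is an Erdős matrix if and only if ⟨A, P_i⟩_F = maxTr(A) for every i ∈ {1, …, m}. -/
open Matrix BigOperators

def IsBistochastic {n : ℕ} (A : Matrix (Fin n) (Fin n) ℝ) : Prop :=
  (∀ i j, 0 ≤ A i j) ∧ (∀ i, ∑ j, A i j = 1) ∧ (∀ j, ∑ i, A i j = 1)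

noncomputable def maxTr {n : ℕ} (A : Matrix (Fin n) (Fin n) ℝ) : ℝ :=
  ⨆ σ : Equiv.Perm (Fin n), ∑ i, A i (σ i)

def frobSq {n : ℕ} (A : Matrix (Fin n) (Fin n) ℝ) : ℝ :=
  ∑ i, ∑ j, (A i j) ^ 2

def IsErdos {n : ℕ} (A : Matrix (Fin n) (Fin n) ℝ) : Prop :=
  IsBistochastic A ∧ frobSq A = maxTr A

def frobInner {n : ℕ} (A B : Matrix (Fin n) (Fin n) ℝ) : ℝ :=
  Matrix.trace (A * Bᵀ)

def IsPermMatrix {n : ℕ} (P : Matrix (Fin n) (Fin n) ℝ) : Prop :=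
  ∃ σ : Equiv.Perm (Fin n), P = σ.permMatrix ℝ

lemma frobInner_permMatrix {n : ℕ} (A : Matrix (Fin n) (Fin n) ℝ) (σ : Equiv.Perm (Fin n)) :
    frobInner A (σ.permMatrix ℝ) = ∑ i, A i (σ i) := by
  simp [frobInner, Matrix.trace, Matrix.mul_apply, Matrix.diag, Equiv.Perm.permMatrix,
    PEquiv.toMatrix, Equiv.toPEquiv, eq_comm]

lemma trace_le_maxTr {n : ℕ} (A : Matrix (Fin n) (Fin n) ℝ) (σ : Equiv.Perm (Fin n)) :
    ∑ i, A i (σ i) ≤ maxTr A := by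
  exact le_ciSup (Set.Finite.bddAbove (Set.finite_range fun τ : Equiv.Perm (Fin n) => ∑ i, A i (τ i))) σ

/-- Let `A = ∑ x i • P i` be bistochastic, `P i` permutation matrices, `x i > 0`,
`∑ x i = 1`. Then `A` is Erdős iff `⟨A, P i⟩_F = maxTr A` for every `i`. -/
theorem erdos_iff_inner_eq_maxTr {n m : ℕ} (P : Fin m → Matrix (Fin n) (Fin n) ℝ)
    (hP : ∀ i, IsPermMatrix (P i)) (x : Fin m → ℝ) (hx : ∀ i, 0 < x i)
    (hsum : ∑ i, x i = 1) (A : Matrix (Fin n) (Fin n) ℝ) (hA : A = ∑ i, x i • P i)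
    (hbi : IsBistochastic A) :
    IsErdos A ↔ ∀ i, frobInner A (P i) = maxTr A := by
  have hle : ∀ i, frobInner A (P i) ≤ maxTr A := by
    intro i
    obtain ⟨σ, hσ⟩ := hP i
    rw [hσ, frobInner_permMatrix]
    exact trace_le_maxTr A σ
  have hfrob : frobSq A = ∑ i, x i * frobInner A (P i) := by
    have h1 : frobSq A = frobInner A A := by
      simp [frobSq, frobInner, Matrix.trace, Matrix.mul_apply, Matrix.diag, sq]
    rw [h1]
    nth_rewrite 2 [hA]
    simp [frobInner, Matrix.transpose_sum, Matrix.mul_sum, Matrix.trace_sum,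
      Matrix.transpose_smul, Matrix.mul_smul, Matrix.trace_smul, smul_eq_mul]
  constructor
  · rintro ⟨-, hE⟩ i
    have key : ∑ j, x j * (maxTr A - frobInner A (P j)) = 0 := by
      have : ∑ j, x j * (maxTr A - frobInner A (P j))
          = (∑ j, x j) * maxTr A - ∑ j, x j * frobInner A (P j) := by
        rw [Finset.sum_mul, ← Finset.sum_sub_distrib]
        congr 1; ext j; ring
      rw [this, hsum, one_mul, ← hfrob, ← hE, sub_self]
    have hnn : ∀ j ∈ Finset.univ, 0 ≤ x j * (maxTr A - frobInner A (P j)) := fun j _ =>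
      mul_nonneg (hx j).le (sub_nonneg.mpr (hle j))
    have := (Finset.sum_eq_zero_iff_of_nonneg hnn).mp key i (Finset.mem_univ i)
    rcases mul_eq_zero.mp this with h | h
    · exact absurd h (hx i).ne'
    · linarith [sub_eq_zero.mp h]
  · intro h
    refine ⟨hbi, ?_⟩
    rw [hfrob]
    simp_rw [h]
    rw [← Finset.sum_mul, hsum, one_mul]
end

section
/- For every n ≥ 1 and every n × n bistochastic matrix A, Δ_n(A) ≤ (n-1)/4, and the matrix M_n = ½ I_n + ½ J_n attains this bound: Δ_n(M_n) = (n-1)/4. Here I_n is the identity matrix and J_n is the n × n matrix all of whose entries equal 1/n. -/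
/-!
For a permutation `σ` put `M_σ = ½ P_σ + ½ J`. Expanding the square shows that every matrix `A`
with unit row sums satisfies `‖A - M_σ‖_F² = ‖A‖_F² - ∑ᵢ A i (σ i) + (n - 1)/4`. Since the left
side is nonnegative, each permutation sum is at most `‖A‖_F² + (n - 1)/4`; taking `A = M_σ`
makes the left side vanish, so `M_σ` (in particular `M_n = M_id`) attains the bound.
-/

open Matrix BigOperators

/-- `Δ_n(A) = maxTr A − ‖A‖_F²`. -/
noncomputable def Delta {n : ℕ} (A : Matrix (Fin n) (Fin n) ℝ) : ℝ :=
  maxTr A - frobSq A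

section Row

variable {ι : Type*} [Fintype ι] [DecidableEq ι]

theorem sum_ite_half_add_const (k : ι) :
    ∑ j, ((if j = k then 1 / 2 else 0) + 1 / (2 * Fintype.card ι) : ℝ) = 1 := by
  have : (Fintype.card ι : ℝ) ≠ 0 := Nat.cast_ne_zero.mpr (Fintype.card_pos_iff.mpr ⟨k⟩).ne'
  simp only [Finset.sum_add_distrib, Finset.sum_ite_eq', Finset.mem_univ, if_true,
    Finset.sum_const, Finset.card_univ, nsmul_eq_mul]
  field_simp
  ring

theorem sum_sq_sub_ite_half_add_const (x : ι → ℝ) (hx : ∑ j, x j = 1) (k : ι) :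
    ∑ j, (x j - ((if j = k then 1 / 2 else 0) + 1 / (2 * Fintype.card ι))) ^ 2 =
      ∑ j, x j ^ 2 - x k + (Fintype.card ι - 1) / (4 * Fintype.card ι) := by
  have : (Fintype.card ι : ℝ) ≠ 0 := Nat.cast_ne_zero.mpr (Fintype.card_pos_iff.mpr ⟨k⟩).ne'
  set c : ℝ := 1 / (2 * Fintype.card ι) with hc
  have hexpand : ∀ j, (x j - ((if j = k then 1 / 2 else 0) + c)) ^ 2 =
      x j ^ 2 - 2 * c * x j + c ^ 2 + if j = k then 1 / 4 - x k + c else 0 := by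
    intro j; split_ifs with h <;> [subst h; skip] <;> ring
  simp only [hexpand, Finset.sum_add_distrib, Finset.sum_sub_distrib, ← Finset.mul_sum, hx,
    Finset.sum_ite_eq', Finset.mem_univ, if_true, Finset.sum_const, Finset.card_univ, nsmul_eq_mul]
  rw [hc]
  field_simp
  ring

end Row

section Midpoint

variable {n : ℕ}

noncomputable def uniformMatrix (n : ℕ) : Matrix (Fin n) (Fin n) ℝ :=
  of fun _ _ => 1 / n

noncomputable def permMidpoint (σ : Equiv.Perm (Fin n)) : Matrix (Fin n) (Fin n) ℝ :=
  (1 / 2 : ℝ) • σ.permMatrix ℝ + (1 / 2 : ℝ) • uniformMatrix n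

theorem permMidpoint_apply (σ : Equiv.Perm (Fin n)) (i j : Fin n) :
    permMidpoint σ i j = (if j = σ i then 1 / 2 else 0) + 1 / (2 * n) := by
  simp only [permMidpoint, uniformMatrix, Matrix.add_apply, Matrix.smul_apply, of_apply,
    smul_eq_mul, PEquiv.toMatrix_apply, Equiv.toPEquiv_apply, Option.mem_def, Option.some.injEq,
    eq_comm]
  split_ifs <;> ring

theorem sum_permMidpoint_row (σ : Equiv.Perm (Fin n)) (i : Fin n) :
    ∑ j, permMidpoint σ i j = 1 := by
  simpa only [permMidpoint_apply, Fintype.card_fin] using sum_ite_half_add_const (σ i)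

theorem frobSq_nonneg (A : Matrix (Fin n) (Fin n) ℝ) : 0 ≤ frobSq A := by
  unfold frobSq; positivity

theorem sum_apply_perm_le_maxTr (A : Matrix (Fin n) (Fin n) ℝ) (σ : Equiv.Perm (Fin n)) :
    ∑ i, A i (σ i) ≤ maxTr A :=
  le_ciSup (f := fun σ : Equiv.Perm (Fin n) => ∑ i, A i (σ i)) (Set.finite_range _).bddAbove σ

theorem frobSq_sub_permMidpoint {A : Matrix (Fin n) (Fin n) ℝ} (hA : ∀ i, ∑ j, A i j = 1)
    (hn : 1 ≤ n) (σ : Equiv.Perm (Fin n)) :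
    frobSq (A - permMidpoint σ) = frobSq A - ∑ i, A i (σ i) + ((n : ℝ) - 1) / 4 := by
  calc frobSq (A - permMidpoint σ)
      = ∑ i, (∑ j, A i j ^ 2 - A i (σ i) + ((n : ℝ) - 1) / (4 * n)) := by
        refine Finset.sum_congr rfl fun i _ => ?_
        simpa only [Matrix.sub_apply, permMidpoint_apply, Fintype.card_fin] using
          sum_sq_sub_ite_half_add_const (A i) (hA i) (σ i)
    _ = frobSq A - ∑ i, A i (σ i) + ((n : ℝ) - 1) / 4 := by
        have : (n : ℝ) ≠ 0 := Nat.cast_ne_zero.mpr (by omega)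
        simp only [frobSq, Finset.sum_add_distrib, Finset.sum_sub_distrib, Finset.sum_const,
          Finset.card_univ, Fintype.card_fin, nsmul_eq_mul]
        field_simp

theorem Delta_le {A : Matrix (Fin n) (Fin n) ℝ} (hA : ∀ i, ∑ j, A i j = 1) (hn : 1 ≤ n) :
    Delta A ≤ ((n : ℝ) - 1) / 4 := by
  refine sub_le_iff_le_add'.mpr (ciSup_le fun σ => ?_)
  have := frobSq_sub_permMidpoint hA hn σ
  linarith [frobSq_nonneg (A - permMidpoint σ)]

theorem Delta_permMidpoint (hn : 1 ≤ n) (σ : Equiv.Perm (Fin n)) :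
    Delta (permMidpoint σ) = ((n : ℝ) - 1) / 4 := by
  refine le_antisymm (Delta_le (sum_permMidpoint_row σ) hn) ?_
  have := frobSq_sub_permMidpoint (sum_permMidpoint_row σ) hn σ
  rw [sub_self, show frobSq (0 : Matrix (Fin n) (Fin n) ℝ) = 0 by simp [frobSq]] at this
  have := sum_apply_perm_le_maxTr (permMidpoint σ) σ
  unfold Delta
  linarith

end Midpoint

/-- For every `n ≥ 1` and every bistochastic `A`, `Δ_n(A) ≤ (n-1)/4`; and the matrix
`M_n = ½ I_n + ½ J_n` attains the bound. -/
theorem delta_max (n : ℕ) (hn : 1 ≤ n) :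
    (∀ A : Matrix (Fin n) (Fin n) ℝ, IsBistochastic A →
      Delta A ≤ ((n : ℝ) - 1) / 4) ∧
    Delta ((1 / 2 : ℝ) • (1 : Matrix (Fin n) (Fin n) ℝ) +
        (1 / 2 : ℝ) • Matrix.of (fun _ _ => (1 : ℝ) / n)) = ((n : ℝ) - 1) / 4 := by
  refine ⟨fun A hA => Delta_le hA.2.1 hn, ?_⟩
  have := Delta_permMidpoint hn 1
  rwa [permMidpoint, permMatrix_one] at this
end
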